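/- For every c ∈ ℂ: if a > 0 then N⁺_{a,c} ∩ {z ∈ ℂ³ : z₂ = 0} = {(z₁, 0, c) : |z₁|² = 2a}, the boundary circle of the holomorphic disk {(z₁, 0, c) : |z₁|² ≤ 2a}; and if a < 0 then N⁺_{a,c} ∩ {z ∈ ℂ³ : z₁ = 0} = {(0, z₂, c) : |z₂|² = −2a}, the boundary circle of the holomorphic disk {(0, z₂, c) : |z₂|² ≤ −2a}. In particular, for every a ≠ 0 the fiber N⁺_{a,c} contains the boundary of a holomorphic disk whose area tends to 0 as a → 0. -/

import Mathlib

open Complex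

/-- Joyce's set `N⁺_{a,c}`. -/
noncomputable def NplusC (a : ℝ) (c : ℂ) : Set (Fin 3 → ℂ) :=
  {z : Fin 3 → ℂ |
    ‖z 0‖ ^ 2 - a = ‖z 1‖ ^ 2 + a ∧
    ‖z 1‖ ^ 2 + a = ‖z 2 - c‖ ^ 2 + |a| ∧
    (z 0 * z 1 * (z 2 - c)).im = 0 ∧ 0 ≤ (z 0 * z 1 * (z 2 - c)).re}

/-! On the coordinate hyperplanes `z₁ = 0` and `z₂ = 0` the phase condition on `z₁z₂(z₃ − c)`
is vacuous, so `N⁺_{a,c}` is cut out by the two moment-map equations alone. For `a > 0` on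
`z₂ = 0` they read `|z₁|² = 2a` and `|z₃ − c|² = a − |a| = 0`; for `a < 0` on `z₁ = 0` they read
`|z₂|² = −2a` and `|z₃ − c|² = |z₂|² + 2a = 0`. -/

theorem mem_NplusC_iff_of_mul_eq_zero {a : ℝ} {c : ℂ} {z : Fin 3 → ℂ} (h : z 0 * z 1 = 0) :
    z ∈ NplusC a c ↔
      ‖z 0‖ ^ 2 - a = ‖z 1‖ ^ 2 + a ∧ ‖z 1‖ ^ 2 + a = ‖z 2 - c‖ ^ 2 + |a| := by
  simp only [NplusC, Set.mem_ofPred_eq, h, zero_mul, zero_im, zero_re, le_refl, and_true]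

theorem eq_of_norm_sub_sq_eq_zero {E : Type*} [NormedAddCommGroup E] {x c : E} (h : ‖x - c‖ ^ 2 = 0) : x = c := by
  simpa [sub_eq_zero] using h

theorem NplusC_inter_snd_eq_zero {a : ℝ} (ha : 0 < a) (c : ℂ) :
    NplusC a c ∩ {z : Fin 3 → ℂ | z 1 = 0} =
      {z : Fin 3 → ℂ | ‖z 0‖ ^ 2 = 2 * a ∧ z 1 = 0 ∧ z 2 = c} := by
  ext z
  simp only [Set.mem_inter_iff, Set.mem_ofPred_eq]
  constructor
  · rintro ⟨hz, hz1⟩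
    rw [mem_NplusC_iff_of_mul_eq_zero (by simp [hz1]), hz1, norm_zero, abs_of_pos ha] at hz
    exact ⟨by linarith, hz1, eq_of_norm_sub_sq_eq_zero (by linarith)⟩
  · rintro ⟨hz0, hz1, hz2⟩
    refine ⟨(mem_NplusC_iff_of_mul_eq_zero (by simp [hz1])).2 ?_, hz1⟩
    simp only [hz1, hz2, sub_self, norm_zero, abs_of_pos ha, and_true]
    linarith

theorem NplusC_inter_fst_eq_zero {a : ℝ} (ha : a < 0) (c : ℂ) :
    NplusC a c ∩ {z : Fin 3 → ℂ | z 0 = 0} =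
      {z : Fin 3 → ℂ | z 0 = 0 ∧ ‖z 1‖ ^ 2 = -(2 * a) ∧ z 2 = c} := by
  ext z
  simp only [Set.mem_inter_iff, Set.mem_ofPred_eq]
  constructor
  · rintro ⟨hz, hz0⟩
    rw [mem_NplusC_iff_of_mul_eq_zero (by simp [hz0]), hz0, norm_zero, abs_of_neg ha] at hz
    exact ⟨hz0, by linarith, eq_of_norm_sub_sq_eq_zero (by linarith)⟩
  · rintro ⟨hz0, hz1, hz2⟩
    refine ⟨(mem_NplusC_iff_of_mul_eq_zero (by simp [hz0])).2 ?_, hz0⟩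
    simp only [hz0, hz2, sub_self, norm_zero, abs_of_neg ha]
    constructor <;> linarith

/-- For `a > 0` the part of `N⁺_{a,c}` with `z₂ = 0` is the boundary circle
`{(z₁,0,c) : |z₁|² = 2a}` of the holomorphic disk `{(z₁,0,c) : |z₁|² ≤ 2a}`, and for
`a < 0` the part with `z₁ = 0` is the boundary circle `{(0,z₂,c) : |z₂|² = −2a}` of the
holomorphic disk `{(0,z₂,c) : |z₂|² ≤ −2a}`; so for `a ≠ 0` the fiber `N⁺_{a,c}`
contains the boundary of a holomorphic disk whose area `2π|a|` tends to `0` as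
`a → 0`. -/
theorem NplusC_contains_disk_boundaries (c : ℂ) :
    (∀ a : ℝ, 0 < a →
      NplusC a c ∩ {z : Fin 3 → ℂ | z 1 = 0} =
        {z : Fin 3 → ℂ | ‖z 0‖ ^ 2 = 2 * a ∧ z 1 = 0 ∧ z 2 = c}) ∧
    (∀ a : ℝ, a < 0 →
      NplusC a c ∩ {z : Fin 3 → ℂ | z 0 = 0} =
        {z : Fin 3 → ℂ | z 0 = 0 ∧ ‖z 1‖ ^ 2 = -(2 * a) ∧ z 2 = c}) :=
  ⟨fun _ ha => NplusC_inter_snd_eq_zero ha c, fun _ ha => NplusC_inter_fst_eq_zero ha c⟩
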